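/- arXiv:2104.07640 — 2 statements merged into one kernel-verified Lean document; each statement's English description precedes it below -/
import Mathlib

section
/- Let m be a nonzero integer and let w be a complex number with Re(w) > 1. Then the Dirichlet series of Ramanujan sums converges absolutely and Σ_{c=1}^∞ c_c(m) c^{−w} = σ_{w−1}(|m|) / (|m|^{w−1} ζ(w)), where c_c(m) := Σ_{1 ≤ d ≤ c, gcd(d,c)=1} e(dm/c) is the Ramanujan sum, σ_z(k) := Σ_{d | k} d^z is the divisor power sum, and ζ is the Riemann zeta function. -/
open Complex Finset

/-- `e(x) = exp(2πix)`. -/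
noncomputable def eFn (x : ℝ) : ℂ := Complex.exp (2 * Real.pi * Complex.I * x)

/-- The Ramanujan sum `c_c(m) = Σ_{1 ≤ d ≤ c, gcd(d,c)=1} e(dm/c)`. -/
noncomputable def ramanujanSum (c : ℕ) (m : ℤ) : ℂ :=
  ∑ d ∈ (Finset.Icc 1 c).filter (fun d => Nat.gcd d c = 1), eFn ((d : ℝ) * (m : ℝ) / (c : ℝ))

/-- The divisor power sum `σ_z(k) = Σ_{d ∣ k} d^z`. -/
noncomputable def sigmaPow (z : ℂ) (k : ℕ) : ℂ := ∑ d ∈ k.divisors, (d : ℂ) ^ z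

open ArithmeticFunction

private lemma geomLemma (m : ℤ) (t : ℕ) (ht : 0 < t) :
    ∑ j ∈ Finset.Icc 1 t, eFn ((j : ℝ) * (m : ℝ) / (t : ℝ)) =
      if (t : ℤ) ∣ m then (t : ℂ) else 0 := by
  have htC : (t : ℂ) ≠ 0 := Nat.cast_ne_zero.mpr ht.ne'
  set z : ℂ := eFn ((m : ℝ) / (t : ℝ)) with hz
  have hzt : ∀ j : ℕ, eFn ((j : ℝ) * (m : ℝ) / (t : ℝ)) = z ^ j := by
    intro j
    rw [hz, eFn, eFn, ← Complex.exp_nat_mul]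
    congr 1
    push_cast
    ring
  have hzpow : z ^ t = 1 := by
    rw [← hzt t, eFn]
    rw [show (2 * (Real.pi:ℂ) * Complex.I * (((t : ℝ) * (m : ℝ) / (t : ℝ) : ℝ) : ℂ))
        = (m : ℤ) * (2 * Real.pi * I) by push_cast; field_simp]
    exact Complex.exp_int_mul_two_pi_mul_I m
  by_cases hd : (t : ℤ) ∣ m
  · obtain ⟨k, hk⟩ := hd
    have hz1 : z = 1 := by
      rw [hz, eFn]
      rw [show (2 * (Real.pi:ℂ) * Complex.I * (((m : ℝ) / (t : ℝ) : ℝ) : ℂ))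
          = (k : ℤ) * (2 * Real.pi * I) by
        push_cast [hk]; field_simp]
      exact Complex.exp_int_mul_two_pi_mul_I k
    rw [if_pos ⟨k, hk⟩]
    simp only [hzt, hz1, one_pow, sum_const, Nat.card_Icc, smul_eq_mul, mul_one]
    simp
  · have hz1 : z ≠ 1 := by
      intro h
      rw [hz, eFn, Complex.exp_eq_one_iff] at h
      obtain ⟨k, hk⟩ := h
      have h2 : (2 * (Real.pi:ℂ) * Complex.I) ≠ 0 := by
        simp [Real.pi_ne_zero, Complex.I_ne_zero]
      have hc : (((m : ℝ) / (t : ℝ) : ℝ) : ℂ) = (k : ℂ) := by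
        apply mul_left_cancel₀ h2
        rw [hk]; ring
      have hreal : (m : ℝ) / (t : ℝ) = (k : ℝ) := by exact_mod_cast hc
      have htR : (t : ℝ) ≠ 0 := Nat.cast_ne_zero.mpr ht.ne'
      have hmr : (m : ℝ) = (k : ℝ) * (t : ℝ) := by
        field_simp at hreal; linarith [hreal]
      have hmz : m = k * t := by exact_mod_cast hmr
      exact hd ⟨k, by rw [hmz]; ring⟩
    rw [if_neg hd]
    calc ∑ j ∈ Finset.Icc 1 t, eFn ((j : ℝ) * (m : ℝ) / (t : ℝ))
        = ∑ j ∈ Finset.Icc 1 t, z ^ j := Finset.sum_congr rfl fun j _ => hzt j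
      _ = ∑ i ∈ Finset.range t, z ^ (1 + i) := by
          rw [← Finset.Ico_add_one_right_eq_Icc, Finset.sum_Ico_eq_sum_range]
          simp
      _ = z * ∑ i ∈ Finset.range t, z ^ i := by
          rw [Finset.mul_sum]; exact Finset.sum_congr rfl fun i _ => by rw [pow_add, pow_one]
      _ = 0 := by rw [geom_sum_eq hz1, hzpow]; simp

private lemma moebius_indicator (g : ℕ) (hg : g ≠ 0) :
    (if g = 1 then (1 : ℂ) else 0) = ∑ k ∈ g.divisors, ((moebius k : ℤ) : ℂ) := by
  have h := congrArg (fun f : ArithmeticFunction ℤ => f g) moebius_mul_coe_zeta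
  simp only [coe_mul_zeta_apply, one_apply] at h
  exact_mod_cast h.symm

private lemma ram_eq_conv (m : ℤ) (c : ℕ) :
    ramanujanSum c m =
      ∑ p ∈ c.divisorsAntidiagonal,
        ((moebius p.1 : ℤ) : ℂ) * (if ((p.2 : ℤ)) ∣ m then (p.2 : ℂ) else 0) := by
  rcases Nat.eq_zero_or_pos c with rfl | hc
  · simp [ramanujanSum]
  have hc0 : c ≠ 0 := hc.ne'
  rw [Nat.sum_divisorsAntidiagonal
    (f := fun k l => ((moebius k : ℤ) : ℂ) * (if ((l : ℤ)) ∣ m then (l : ℂ) else 0))]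
  -- step 1: write as full sum with indicator
  rw [ramanujanSum, Finset.sum_filter]
  have step1 : ∀ d ∈ Finset.Icc 1 c,
      (if Nat.gcd d c = 1 then eFn ((d : ℝ) * (m : ℝ) / (c : ℝ)) else 0)
      = ∑ k ∈ c.divisors, (if k ∣ d then ((moebius k : ℤ) : ℂ) else 0)
          * eFn ((d : ℝ) * (m : ℝ) / (c : ℝ)) := by
    intro d hd
    rw [← Finset.sum_mul, ← Finset.sum_filter]
    have hdiv : c.divisors.filter (fun k => k ∣ d) = (Nat.gcd d c).divisors := by
      ext k
      simp only [Finset.mem_filter, Nat.mem_divisors, Nat.dvd_gcd_iff,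
        Nat.gcd_ne_zero_right hc0, and_true, hc0, ne_eq, not_false_eq_true]
      tauto
    rw [hdiv, ← moebius_indicator _ (Nat.gcd_ne_zero_right hc0)]
    split_ifs <;> simp
  rw [Finset.sum_congr rfl step1, Finset.sum_comm]
  refine Finset.sum_congr rfl fun k hk => ?_
  obtain ⟨hkc, -⟩ := Nat.mem_divisors.mp hk
  have hk0 : k ≠ 0 := fun h => hc0 (by simpa [h] using hkc)
  have ht : 0 < c / k := Nat.div_pos (Nat.le_of_dvd hc hkc) (Nat.pos_of_ne_zero hk0)
  rw [← geomLemma m (c / k) ht]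
  simp_rw [ite_mul, zero_mul, ← Finset.sum_filter]
  rw [Finset.mul_sum]
  -- reindex: filter (k ∣ ·) (Icc 1 c) = image (k * ·) (Icc 1 (c/k))
  have himg : (Finset.Icc 1 c).filter (fun d => k ∣ d)
      = (Finset.Icc 1 (c / k)).image (fun j => k * j) := by
    ext d
    simp only [Finset.mem_filter, Finset.mem_Icc, Finset.mem_image]
    constructor
    · rintro ⟨⟨h1, h2⟩, j, rfl⟩
      exact ⟨j, ⟨Nat.one_le_iff_ne_zero.mpr (fun h => by simp [h] at h1),
        Nat.le_div_iff_mul_le (Nat.pos_of_ne_zero hk0) |>.mpr (by linarith [h2])⟩, rfl⟩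
    · rintro ⟨j, ⟨h1, h2⟩, rfl⟩
      refine ⟨⟨Nat.one_le_iff_ne_zero.mpr ?_, ?_⟩, ⟨j, rfl⟩⟩
      · positivity
      · calc k * j ≤ k * (c / k) := Nat.mul_le_mul_left k h2
          _ ≤ c := Nat.mul_div_le c k
  rw [himg, Finset.sum_image (fun a _ b _ h => by
    exact Nat.eq_of_mul_eq_mul_left (Nat.pos_of_ne_zero hk0) h)]
  refine Finset.sum_congr rfl fun j hj => ?_
  congr 1
  have hck : (c : ℝ) = (k : ℝ) * ((c / k : ℕ) : ℝ) := by
    exact_mod_cast congrArg (Nat.cast : ℕ → ℝ) (Nat.mul_div_cancel' hkc).symm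
  have hkR : (k : ℝ) ≠ 0 := Nat.cast_ne_zero.mpr hk0
  have htR : ((c / k : ℕ) : ℝ) ≠ 0 := Nat.cast_ne_zero.mpr ht.ne'
  rw [hck]
  push_cast
  field_simp

theorem ramanujan_sum_dirichlet_series (m : ℤ) (hm : m ≠ 0) (w : ℂ) (hw : 1 < w.re) :
    Summable (fun c : ℕ => ‖ramanujanSum c m * (c : ℂ) ^ (-w)‖) ∧
    ∑' c : ℕ, ramanujanSum c m * (c : ℂ) ^ (-w) =
      sigmaPow (w - 1) m.natAbs / ((m.natAbs : ℂ) ^ (w - 1) * riemannZeta w) := by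
  set n : ℕ := m.natAbs with hn
  have hn0 : 0 < n := Int.natAbs_pos.mpr hm
  set g : ℕ → ℂ := fun d => if ((d : ℤ)) ∣ m then (d : ℂ) else 0 with hg
  have hdvd : ∀ d : ℕ, ((d : ℤ) ∣ m) ↔ d ∣ n := fun d => Int.natCast_dvd
  -- Part 1: norm summability
  set K : ℝ := ∑ d ∈ n.divisors, (d : ℝ) with hK
  have hK0 : 0 ≤ K := Finset.sum_nonneg fun d _ => Nat.cast_nonneg d
  have hram_bound : ∀ c : ℕ, ‖ramanujanSum c m‖ ≤ K := by
    intro c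
    rw [ram_eq_conv]
    calc ‖∑ p ∈ c.divisorsAntidiagonal,
          ((moebius p.1 : ℤ) : ℂ) * (if ((p.2 : ℤ)) ∣ m then (p.2 : ℂ) else 0)‖
        ≤ ∑ p ∈ c.divisorsAntidiagonal,
          ‖((moebius p.1 : ℤ) : ℂ) * (if ((p.2 : ℤ)) ∣ m then (p.2 : ℂ) else 0)‖ :=
          norm_sum_le _ _
      _ ≤ ∑ p ∈ c.divisorsAntidiagonal, (if p.2 ∣ n then (p.2 : ℝ) else 0) := by
          refine Finset.sum_le_sum fun p _ => ?_
          rw [norm_mul]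
          have h1 : ‖((moebius p.1 : ℤ) : ℂ)‖ ≤ 1 := by
            rw [Complex.norm_intCast]
            exact_mod_cast abs_moebius_le_one (n := p.1)
          simp only [hdvd]
          split_ifs with h
          · rw [Complex.norm_natCast]
            exact mul_le_of_le_one_left (Nat.cast_nonneg _) h1
          · simp
      _ ≤ K := by
          rw [Nat.sum_divisorsAntidiagonal' (f := fun _ l => if l ∣ n then (l : ℝ) else 0)]
          rw [← Finset.sum_filter]
          refine Finset.sum_le_sum_of_subset_of_nonneg ?_ (fun i _ _ => Nat.cast_nonneg i)
          intro l hl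
          rw [Finset.mem_filter, Nat.mem_divisors] at hl
          exact Nat.mem_divisors.mpr ⟨hl.2, hn0.ne'⟩
  have hbound : ∀ c : ℕ, ‖ramanujanSum c m * (c : ℂ) ^ (-w)‖ ≤ K * (c : ℝ) ^ (-w.re) := by
    intro c
    rcases Nat.eq_zero_or_pos c with rfl | hc
    · simp [ramanujanSum]
      positivity
    · rw [norm_mul, norm_natCast_cpow_of_pos hc, neg_re]
      exact mul_le_mul_of_nonneg_right (hram_bound c) (Real.rpow_nonneg (Nat.cast_nonneg c) _)
  have hsummable : Summable (fun c : ℕ => ‖ramanujanSum c m * (c : ℂ) ^ (-w)‖) := by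
    refine Summable.of_nonneg_of_le (fun c => norm_nonneg _) hbound ?_
    exact (Real.summable_nat_rpow.mpr (by linarith)).mul_left K
  refine ⟨hsummable, ?_⟩
  -- Part 2: the value
  have hconv : ∀ c : ℕ, ramanujanSum c m
      = LSeries.convolution (fun k => ((moebius k : ℤ) : ℂ)) g c := by
    intro c
    rw [LSeries.convolution_def, ram_eq_conv]
  have hμs : LSeriesSummable (fun k => ((moebius k : ℤ) : ℂ)) w :=
    ArithmeticFunction.LSeriesSummable_moebius_iff.mpr hw
  have hgs : LSeriesSummable g w := by
    refine summable_of_ne_finset_zero (s := n.divisors) fun b hb => ?_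
    rcases Nat.eq_zero_or_pos b with rfl | hb0
    · exact LSeries.term_zero _ _
    · rw [LSeries.term_of_ne_zero hb0.ne' g w]
      have : ¬ ((b : ℤ) ∣ m) := fun h => hb (Nat.mem_divisors.mpr ⟨(hdvd b).mp h, hn0.ne'⟩)
      simp [hg, this]
  have htsum : ∑' c : ℕ, ramanujanSum c m * (c : ℂ) ^ (-w)
      = LSeries (LSeries.convolution (fun k => ((moebius k : ℤ) : ℂ)) g) w := by
    refine tsum_congr fun c => ?_
    rcases Nat.eq_zero_or_pos c with rfl | hc
    · simp [ramanujanSum, LSeries.term_zero]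
    · rw [LSeries.term_of_ne_zero hc.ne', ← hconv c, Complex.cpow_neg, div_eq_mul_inv]
  rw [htsum, LSeries_convolution' hμs hgs]
  have hζ : riemannZeta w ≠ 0 := riemannZeta_ne_zero_of_one_lt_re hw
  have hμval : LSeries (fun k => ((moebius k : ℤ) : ℂ)) w = (riemannZeta w)⁻¹ := by
    have h := ArithmeticFunction.LSeries_zeta_mul_Lseries_moebius hw
    rw [ArithmeticFunction.LSeries_zeta_eq_riemannZeta hw] at h
    exact (inv_eq_of_mul_eq_one_right h).symm
  have hgval : LSeries g w = ∑ d ∈ n.divisors, (d : ℂ) * (d : ℂ) ^ (-w) := by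
    rw [LSeries]
    rw [tsum_eq_sum (s := n.divisors) (fun b hb => ?_)]
    · refine Finset.sum_congr rfl fun d hd => ?_
      have hd0 : d ≠ 0 := Nat.pos_of_mem_divisors hd |>.ne'
      have hddvd : (d : ℤ) ∣ m := (hdvd d).mpr (Nat.dvd_of_mem_divisors hd)
      rw [LSeries.term_of_ne_zero hd0, hg]
      simp only [if_pos hddvd]
      rw [Complex.cpow_neg, div_eq_mul_inv]
    · rcases Nat.eq_zero_or_pos b with rfl | hb0
      · exact LSeries.term_zero _ _
      · rw [LSeries.term_of_ne_zero hb0.ne' g w]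
        have : ¬ ((b : ℤ) ∣ m) := fun h => hb (Nat.mem_divisors.mpr ⟨(hdvd b).mp h, hn0.ne'⟩)
        simp [hg, this]
  rw [hμval, hgval]
  -- final algebra
  have hnC : ((n : ℂ)) ≠ 0 := Nat.cast_ne_zero.mpr hn0.ne'
  have hnw : ((n : ℂ)) ^ (w - 1) ≠ 0 := by
    rw [Ne, Complex.cpow_eq_zero_iff]
    tauto
  have hkey : (n : ℂ) ^ (w - 1) * (∑ d ∈ n.divisors, (d : ℂ) * (d : ℂ) ^ (-w))
      = sigmaPow (w - 1) n := by
    rw [sigmaPow, ← Nat.sum_div_divisors n (fun d => (d : ℂ) ^ (w - 1)), Finset.mul_sum]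
    refine Finset.sum_congr rfl fun d hd => ?_
    have hd0 : (d : ℂ) ≠ 0 := Nat.cast_ne_zero.mpr (Nat.pos_of_mem_divisors hd).ne'
    have hddvd := Nat.dvd_of_mem_divisors hd
    have hnd : n = d * (n / d) := (Nat.mul_div_cancel' hddvd).symm
    have hsplit : (n : ℂ) ^ (w - 1) = (d : ℂ) ^ (w - 1) * ((n / d : ℕ) : ℂ) ^ (w - 1) := by
      have h1 : (n : ℂ) = (((d : ℝ) * ((n / d : ℕ) : ℝ) : ℝ) : ℂ) := by
        push_cast
        exact_mod_cast congrArg (Nat.cast : ℕ → ℂ) hnd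
      rw [h1, Complex.ofReal_mul,
        mul_cpow_ofReal_nonneg (Nat.cast_nonneg d) (Nat.cast_nonneg _)]
      norm_cast
    rw [hsplit]
    have h2 : (d : ℂ) ^ (w - 1) * (d : ℂ) ^ (-w) = (d : ℂ)⁻¹ := by
      rw [← Complex.cpow_add _ _ hd0, show w - 1 + -w = -1 by ring, Complex.cpow_neg_one]
    have : (d : ℂ) ^ (w - 1) * ((d : ℂ) * (d : ℂ) ^ (-w)) = 1 := by
      calc (d : ℂ) ^ (w - 1) * ((d : ℂ) * (d : ℂ) ^ (-w))
          = ((d : ℂ) ^ (w - 1) * (d : ℂ) ^ (-w)) * (d : ℂ) := by ring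
        _ = (d : ℂ)⁻¹ * (d : ℂ) := by rw [h2]
        _ = 1 := inv_mul_cancel₀ hd0
    calc (d : ℂ) ^ (w - 1) * ((n / d : ℕ) : ℂ) ^ (w - 1) * ((d : ℂ) * (d : ℂ) ^ (-w))
        = ((n / d : ℕ) : ℂ) ^ (w - 1) * ((d : ℂ) ^ (w - 1) * ((d : ℂ) * (d : ℂ) ^ (-w))) := by
          ring
      _ = ((n / d : ℕ) : ℂ) ^ (w - 1) := by rw [this, mul_one]
  rw [← hkey]
  field_simp
end

section
/- Let θ ∈ [0, 1/2), ε > 0, and let l be a nonnegative integer. Then there exists a constant C = C(θ, ε, l) > 0 with the following property. Suppose λ : ℤ∖{0} → ℂ satisfies |λ(m)| ≤ |m|^{θ + ε/8} for all nonzero integers m, and W : ℝ∖{0} → ℂ satisfies |W(y)| ≤ min(|y|^{1/2 − ε/8}, |y|^{−1/2 − θ − ε/4}) for all nonzero real y. Then for every positive integer n, Σ_{m ∈ ℤ, m ≠ 0} (|λ(m)| / √|m|) · |W(m/n)| · |r_n(m + l)| ≤ C n^{−1/2 + θ + ε}, where r_n(m') := (1/φ(n)) Σ_{1 ≤ a ≤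 n, gcd(a,n)=1} e(am'/n) is the normalized Ramanujan sum. -/
/-!
Expanding the Ramanujan sum by Möbius inversion gives `|r_n(m)| ≤ φ(n)⁻¹ ∑_{g ∣ n, g ∣ m} g`.
For `m ≠ 0` the bounds on `λ` and `W` dominate the other two factors by
`n^(θ + 1/2 + ε/4) · min (1/n) |m|^(-1-ε/8)`, and summing this weight over the progression
`m ≡ -l (mod g)` with `g ≤ n` costs only `O_l(1/g)`, which cancels the factor `g`.
The whole sum is therefore `O(n^(θ + 1/2 + ε/4) τ(n) / φ(n))`, and `n ≤ φ(n) τ(n)` together with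
the divisor bound `τ(n) = O(n^δ)` gives `τ(n) / φ(n) = O(n^(3ε/4 - 1))`.
-/

open Complex Finset

/-- The normalized Ramanujan sum `r_n(m) = (1/φ(n)) Σ_{1 ≤ a ≤ n, gcd(a,n)=1} e(am/n)`. -/
noncomputable def normRamanujanSum (n : ℕ) (m : ℤ) : ℂ :=
  (1 / (Nat.totient n : ℂ)) *
    ∑ a ∈ (Finset.Icc 1 n).filter (fun a => Nat.gcd a n = 1), eFn ((a : ℝ) * (m : ℝ) / (n : ℝ))

open ArithmeticFunction
open scoped ArithmeticFunction.Moebius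

lemma eFn_natCast_mul (b : ℕ) (x : ℝ) : eFn (b * x) = eFn x ^ b := by
  rw [eFn, eFn, ← Complex.exp_nat_mul]
  push_cast
  ring_nf

lemma eFn_eq_one_iff (x : ℝ) : eFn x = 1 ↔ ∃ k : ℤ, x = k := by
  rw [eFn, Complex.exp_eq_one_iff]
  refine exists_congr fun k => ⟨fun h => ?_, fun h => by rw [h]; push_cast; ring⟩
  have h2πI : 2 * (Real.pi : ℂ) * I ≠ 0 := by simp [Real.pi_ne_zero]
  exact_mod_cast mul_left_cancel₀ h2πI (h.trans (mul_comm _ _))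

lemma sum_Icc_eFn_mul_div {N : ℕ} (hN : 0 < N) (m : ℤ) :
    ∑ b ∈ Icc 1 N, eFn (b * m / N) = if (N : ℤ) ∣ m then (N : ℂ) else 0 := by
  have hN0 : (N : ℝ) ≠ 0 := by positivity
  set w := eFn (m / N)
  have hpow (b : ℕ) : eFn (b * m / N) = w ^ b := by rw [← eFn_natCast_mul, mul_div_assoc]
  have hw_eq_one : w = 1 ↔ (N : ℤ) ∣ m := by
    rw [eFn_eq_one_iff]
    refine exists_congr fun k => ?_
    rw [div_eq_iff hN0, mul_comm]
    exact_mod_cast Iff.rfl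
  have hwN : w ^ N = 1 := by
    rw [← hpow, mul_div_cancel_left₀ _ hN0, eFn_eq_one_iff]
    exact ⟨m, rfl⟩
  simp only [hpow]
  rw [← Ico_add_one_right_eq_Icc, sum_Ico_eq_sum_range, add_tsub_cancel_right]
  simp only [pow_add, pow_one, ← mul_sum]
  split_ifs with h
  · simp [hw_eq_one.mpr h]
  · rw [geom_sum_eq (mt hw_eq_one.mp h), hwN, sub_self, zero_div, mul_zero]

lemma sum_Icc_filter_dvd {M : Type*} [AddCommMonoid M] {d n : ℕ} (hd : 0 < d) (hdn : d ∣ n)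
    (f : ℕ → M) : ∑ a ∈ Icc 1 n with d ∣ a, f a = ∑ b ∈ Icc 1 (n / d), f (d * b) := by
  obtain ⟨k, rfl⟩ := hdn
  rw [Nat.mul_div_cancel_left k hd, ← sum_image (mul_right_injective₀ hd.ne').injOn]
  congr 1
  ext a
  simp only [mem_filter, mem_Icc, mem_image]
  constructor
  · rintro ⟨⟨ha1, hak⟩, b, rfl⟩
    exact ⟨b, ⟨Nat.pos_of_mul_pos_left ha1, Nat.le_of_mul_le_mul_left hak hd⟩, rfl⟩
  · rintro ⟨b, ⟨hb1, hbk⟩, rfl⟩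
    exact ⟨⟨Nat.mul_pos hd hb1, Nat.mul_le_mul_left d hbk⟩, dvd_mul_right d b⟩

lemma sum_divisors_moebius (k : ℕ) :
    ∑ d ∈ k.divisors, (μ d : ℂ) = if k = 1 then 1 else 0 := by
  have h := congrArg (fun f : ArithmeticFunction ℂ => f k) coe_moebius_mul_coe_zeta
  simp only [coe_mul_zeta_apply, intCoe_apply, one_apply] at h
  exact h

lemma divisors_filter_dvd_eq_gcd_divisors {n : ℕ} (hn : n ≠ 0) (a : ℕ) :
    {d ∈ n.divisors | d ∣ a} = (a.gcd n).divisors := by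
  ext d
  simp [Nat.dvd_gcd_iff, hn, and_comm]

lemma sum_coprime_eFn_eq {n : ℕ} (hn : 0 < n) (m : ℤ) :
    ∑ a ∈ Icc 1 n with a.gcd n = 1, eFn (a * m / n) =
      ∑ d ∈ n.divisors, (μ d : ℂ) * if ((n / d : ℕ) : ℤ) ∣ m then ((n / d : ℕ) : ℂ) else 0 := by
  have hcoprime (a : ℕ) : (if a.gcd n = 1 then eFn (a * m / n) else 0) =
      ∑ d ∈ n.divisors, if d ∣ a then (μ d : ℂ) * eFn (a * m / n) else 0 := by
    rw [← sum_filter, ← sum_mul, divisors_filter_dvd_eq_gcd_divisors hn.ne', sum_divisors_moebius]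
    split_ifs <;> simp
  rw [sum_filter, sum_congr rfl fun a _ => hcoprime a, sum_comm]
  refine sum_congr rfl fun d hd => ?_
  obtain ⟨hdn, -⟩ := Nat.mem_divisors.mp hd
  have hd0 : 0 < d := Nat.pos_of_dvd_of_pos hdn hn
  rw [← sum_filter, ← mul_sum, sum_Icc_filter_dvd hd0 hdn,
    ← sum_Icc_eFn_mul_div (Nat.div_pos (Nat.le_of_dvd hn hdn) hd0)]
  congr 2 with b
  rw [Nat.cast_div hdn (by positivity)]
  push_cast
  field_simp

lemma norm_normRamanujanSum_le {n : ℕ} (hn : 0 < n) (m : ℤ) :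
    ‖normRamanujanSum n m‖ ≤ (∑ g ∈ n.divisors with ((g : ℕ) : ℤ) ∣ m, (g : ℝ)) / n.totient := by
  rw [normRamanujanSum, sum_coprime_eFn_eq hn, norm_mul, norm_div, norm_one, Complex.norm_natCast,
    one_div_mul_eq_div]
  gcongr
  calc _ ≤ ∑ d ∈ n.divisors, if ((n / d : ℕ) : ℤ) ∣ m then ((n / d : ℕ) : ℝ) else 0 := by
        refine (norm_sum_le _ _).trans (sum_le_sum fun d _ => ?_)
        rw [norm_mul, Complex.norm_intCast]
        split_ifs
        · simpa using mul_le_of_le_one_left (Nat.cast_nonneg (n / d))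
            (by exact_mod_cast abs_moebius_le_one)
        · simp
    _ = ∑ g ∈ n.divisors with ((g : ℕ) : ℤ) ∣ m, (g : ℝ) := by
        rw [Nat.sum_div_divisors n fun g => if (g : ℤ) ∣ m then (g : ℝ) else 0, sum_filter]

lemma le_totient_mul_card_divisors (n : ℕ) : n ≤ n.totient * #n.divisors := by
  rcases Nat.eq_zero_or_pos n with rfl | hn
  · simp
  have hprime_pow (p : ℕ) (hp : p ∈ n.primeFactors) :
      p ^ n.factorization p ≤ p ^ (n.factorization p - 1) * (p - 1) * (n.factorization p + 1) := by
    have hp2 := (Nat.prime_of_mem_primeFactors hp).two_le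
    have hk0 : n.factorization p ≠ 0 := Finsupp.mem_support_iff.mp (by simpa using hp)
    obtain ⟨k, hk⟩ := Nat.exists_eq_add_one_of_ne_zero hk0
    rw [hk, pow_succ, Nat.add_sub_cancel, mul_assoc]
    refine Nat.mul_le_mul_left _ ?_
    calc p ≤ (p - 1) * 2 := by omega
      _ ≤ (p - 1) * (k + 1 + 1) := by gcongr; omega
  calc n = ∏ p ∈ n.primeFactors, p ^ n.factorization p := by
        conv_lhs => rw [← Nat.prod_factorization_pow_eq_self hn.ne']
        rfl
    _ ≤ ∏ p ∈ n.primeFactors, p ^ (n.factorization p - 1) * (p - 1) * (n.factorization p + 1) :=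
        prod_le_prod' hprime_pow
    _ = n.totient * #n.divisors := by
        rw [prod_mul_distrib, Nat.totient_eq_prod_factorization hn.ne', Nat.card_divisors hn.ne']
        rfl

lemma natCast_add_one_le_rpow_pow {x δ : ℝ} (hx : 0 ≤ x) (hxδ : 2 ≤ x ^ δ) (k : ℕ) :
    (k + 1 : ℝ) ≤ (x ^ k) ^ δ := by
  rw [← Real.rpow_pow_comm hx]
  calc (k + 1 : ℝ) ≤ 2 ^ k := by exact_mod_cast Nat.lt_two_pow_self
    _ ≤ (x ^ δ) ^ k := by gcongr

lemma natCast_add_one_le_mul_rpow_pow {x δ : ℝ} (hδ : 0 < δ) (hx : 2 ≤ x) (k : ℕ) :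
    (k + 1 : ℝ) ≤ (1 + 1 / (δ * Real.log 2)) * (x ^ k) ^ δ := by
  have hc : 0 < δ * Real.log 2 := mul_pos hδ (Real.log_pos one_lt_two)
  have hexp : 1 + k * (δ * Real.log 2) ≤ (x ^ k) ^ δ :=
    calc 1 + k * (δ * Real.log 2) ≤ Real.exp (k * (δ * Real.log 2)) := by
          linarith [Real.add_one_le_exp (k * (δ * Real.log 2))]
      _ = ((2 : ℝ) ^ k) ^ δ := by
          rw [Real.rpow_def_of_pos (by positivity), Real.log_pow]
          ring_nf
      _ ≤ (x ^ k) ^ δ := by gcongr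
  have hexpand : (1 + 1 / (δ * Real.log 2)) * (1 + k * (δ * Real.log 2)) =
      k + 1 + (k * (δ * Real.log 2) + 1 / (δ * Real.log 2)) := by
    field_simp
    ring
  calc (k + 1 : ℝ) ≤ (1 + 1 / (δ * Real.log 2)) * (1 + k * (δ * Real.log 2)) := by
        rw [hexpand]
        linarith [show 0 ≤ k * (δ * Real.log 2) + 1 / (δ * Real.log 2) by positivity]
    _ ≤ _ := by gcongr

lemma exists_card_divisors_le_mul_rpow {δ : ℝ} (hδ : 0 < δ) :
    ∃ C : ℝ, 0 < C ∧ ∀ n : ℕ, (#n.divisors : ℝ) ≤ C * (n : ℝ) ^ δ := by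
  set B := 1 + 1 / (δ * Real.log 2)
  have hB : 1 ≤ B := le_add_of_nonneg_right (by positivity)
  obtain ⟨M, hM⟩ := exists_nat_ge ((2 : ℝ) ^ (1 / δ))
  refine ⟨B ^ M, by positivity, fun n => ?_⟩
  rcases Nat.eq_zero_or_pos n with rfl | hn
  · simp [Real.zero_rpow hδ.ne']
  -- a prime power `p ^ k` has `k + 1 ≤ (p ^ k) ^ δ` once `p ≥ 2 ^ (1 / δ)`, and the fewer than `M`
  -- smaller primes lose a factor `B` each
  have hprime_pow (p : ℕ) (hp : p ∈ n.primeFactors) : (n.factorization p + 1 : ℝ) ≤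
      (if p < M then B else 1) * ((p : ℝ) ^ n.factorization p) ^ δ := by
    have hp2 : (2 : ℝ) ≤ p := by exact_mod_cast (Nat.prime_of_mem_primeFactors hp).two_le
    split_ifs with hpM
    · exact natCast_add_one_le_mul_rpow_pow hδ hp2 _
    · rw [one_mul]
      refine natCast_add_one_le_rpow_pow (by positivity) ?_ _
      calc (2 : ℝ) = ((2 : ℝ) ^ (1 / δ)) ^ δ := by
            rw [← Real.rpow_mul zero_le_two, one_div_mul_cancel hδ.ne', Real.rpow_one]
        _ ≤ (p : ℝ) ^ δ := by
            gcongr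
            exact hM.trans (by exact_mod_cast not_lt.mp hpM)
  have hsmall : ∏ p ∈ n.primeFactors, (if p < M then B else 1) ≤ B ^ M := by
    rw [prod_ite, prod_const, prod_const_one, mul_one]
    refine pow_le_pow_right₀ hB ((card_le_card fun p hp => ?_).trans (card_range M).le)
    exact mem_range.mpr (mem_filter.mp hp).2
  calc (#n.divisors : ℝ) = ∏ p ∈ n.primeFactors, (n.factorization p + 1 : ℝ) := by
        rw [Nat.card_divisors hn.ne']
        push_cast
        rfl
    _ ≤ ∏ p ∈ n.primeFactors, (if p < M then B else 1) * ((p : ℝ) ^ n.factorization p) ^ δ :=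
        prod_le_prod (fun _ _ => by positivity) hprime_pow
    _ ≤ B ^ M * (n : ℝ) ^ δ := by
        rw [prod_mul_distrib, Real.finsetProd_rpow _ _ fun _ _ => by positivity]
        conv_rhs => rw [← Nat.prod_factorization_pow_eq_self hn.ne']
        rw [Nat.cast_finsuppProd]
        gcongr
        exact le_of_eq (by simp [Finsupp.prod, Nat.support_factorization])

lemma exists_card_divisors_div_totient_le {δ : ℝ} (hδ : 0 < δ) :
    ∃ C : ℝ, 0 < C ∧ ∀ n : ℕ, 0 < n →
      (#n.divisors : ℝ) / n.totient ≤ C * (n : ℝ) ^ (δ - 1) := by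
  obtain ⟨C, hC, hτ⟩ := exists_card_divisors_le_mul_rpow (half_pos hδ)
  refine ⟨C ^ 2, by positivity, fun n hn => ?_⟩
  have hφ : (0 : ℝ) < n.totient := by exact_mod_cast Nat.totient_pos.mpr hn
  have hn' : (0 : ℝ) < n := by exact_mod_cast hn
  have hle : (n : ℝ) ≤ n.totient * #n.divisors := by exact_mod_cast le_totient_mul_card_divisors n
  calc (#n.divisors : ℝ) / n.totient ≤ (#n.divisors : ℝ) ^ 2 / n := by
        rw [div_le_div_iff₀ hφ hn']
        nlinarith [Nat.cast_nonneg (α := ℝ) #n.divisors]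
    _ ≤ (C * (n : ℝ) ^ (δ / 2)) ^ 2 / n := by gcongr; exact hτ n
    _ = C ^ 2 * (n : ℝ) ^ (δ - 1) := by
        rw [mul_pow, ← Real.rpow_mul_natCast hn'.le, Real.rpow_sub_one hn'.ne']
        ring_nf

lemma summable_abs_add_one_rpow_neg {s : ℝ} (hs : 1 < s) :
    Summable fun k : ℤ => (|(k : ℝ)| + 1) ^ (-s) := by
  refine ((Real.summable_abs_int_rpow hs).update 0 1).of_nonneg_of_le (fun _ => by positivity)
    fun k => ?_
  rcases eq_or_ne k 0 with rfl | hk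
  · simp
  · rw [Function.update_of_ne hk]
    exact Real.rpow_le_rpow_of_nonpos (by positivity) (by linarith) (by linarith)

noncomputable def progressionWeight (g l : ℕ) (N s : ℝ) (m : ℤ) : ℝ :=
  if m ≠ 0 ∧ (g : ℤ) ∣ m + l then min (1 / N) (|(m : ℝ)| ^ (-s)) else 0

lemma progressionWeight_nonneg {g l : ℕ} {N s : ℝ} (hN : 0 ≤ N) (m : ℤ) :
    0 ≤ progressionWeight g l N s m := by
  unfold progressionWeight
  split_ifs
  · exact le_min (by positivity) (by positivity)
  · rfl

/-- With `m = g k - l`: if `g ≤ |m|` then `g (|k| + 1) ≤ (l + 2) |m|`, and otherwise `|k| ≤ l`. -/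
lemma min_one_div_abs_rpow_neg_le {g l : ℕ} {N s : ℝ} (hg : 0 < g) (hgN : (g : ℝ) ≤ N)
    (hs : 1 ≤ s) {k : ℤ} (hm : (g : ℤ) * k - l ≠ 0) :
    min (1 / N) (|(((g : ℤ) * k - l : ℤ) : ℝ)| ^ (-s)) ≤
      ((l : ℝ) + 2) ^ s / g * (|(k : ℝ)| + 1) ^ (-s) := by
  set m : ℤ := g * k - l
  have hg' : (1 : ℝ) ≤ g := by exact_mod_cast hg
  have hm1 : (1 : ℝ) ≤ |(m : ℝ)| := by exact_mod_cast Int.one_le_abs hm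
  have hgk : (g : ℝ) * |(k : ℝ)| ≤ |(m : ℝ)| + l := by
    have h : (g : ℤ) * |k| ≤ |m| + l :=
      calc (g : ℤ) * |k| = |m + l| := by simp [m, abs_mul]
        _ ≤ |m| + l := (abs_add_le _ _).trans_eq (by simp)
    exact_mod_cast h
  rw [Real.rpow_neg (by positivity), Real.rpow_neg (by positivity), ← div_eq_mul_inv]
  rcases le_or_gt (g : ℝ) |(m : ℝ)| with hgm | hmg
  · have hkm : (g : ℝ) * (|(k : ℝ)| + 1) ≤ (l + 2) * |(m : ℝ)| := by nlinarith
    refine (min_le_right _ _).trans ?_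
    rw [div_div, inv_eq_one_div, div_le_div_iff₀ (by positivity) (by positivity), one_mul]
    calc (g : ℝ) * (|(k : ℝ)| + 1) ^ s ≤ (g : ℝ) ^ s * (|(k : ℝ)| + 1) ^ s := by
          gcongr
          exact Real.self_le_rpow_of_one_le hg' hs
      _ = ((g : ℝ) * (|(k : ℝ)| + 1)) ^ s := by rw [Real.mul_rpow (by positivity) (by positivity)]
      _ ≤ ((l + 2) * |(m : ℝ)|) ^ s := by gcongr
      _ = (l + 2) ^ s * |(m : ℝ)| ^ s := Real.mul_rpow (by positivity) (by positivity)
  · have hk : |(k : ℝ)| + 1 ≤ l + 2 := by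
      have : (g : ℝ) * |(k : ℝ)| ≤ g * (l + 1) := by nlinarith
      nlinarith
    refine (min_le_left _ _).trans ?_
    calc 1 / N ≤ 1 / g := one_div_le_one_div_of_le (by positivity) hgN
      _ ≤ (l + 2) ^ s / (g * (|(k : ℝ)| + 1) ^ s) := by
          rw [div_le_div_iff₀ (by positivity) (by positivity), one_mul, mul_comm]
          gcongr
      _ = (l + 2) ^ s / g / (|(k : ℝ)| + 1) ^ s := by rw [div_div]

lemma summable_progressionWeight_and_tsum_le {g l : ℕ} {N s : ℝ} (hg : 0 < g) (hgN : (g : ℝ) ≤ N)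
    (hs : 1 < s) : Summable (progressionWeight g l N s) ∧
      ∑' m, progressionWeight g l N s m ≤
        ((l : ℝ) + 2) ^ s / g * ∑' k : ℤ, (|(k : ℝ)| + 1) ^ (-s) := by
  have hN : 0 ≤ N := le_trans (Nat.cast_nonneg g) hgN
  set i : ℤ → ℤ := fun k => g * k - l
  have hi : Function.Injective i := fun a b hab =>
    mul_left_cancel₀ (by exact_mod_cast hg.ne' : (g : ℤ) ≠ 0) (sub_left_injective hab)
  have hsupp : ∀ m ∉ Set.range i, progressionWeight g l N s m = 0 := by
    intro m hm
    rw [progressionWeight, if_neg]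
    rintro ⟨-, k, hk⟩
    exact hm ⟨k, by simp only [i]; omega⟩
  have hle (k : ℤ) : progressionWeight g l N s (i k) ≤
      ((l : ℝ) + 2) ^ s / g * (|(k : ℝ)| + 1) ^ (-s) := by
    unfold progressionWeight
    split_ifs with h
    · exact min_one_div_abs_rpow_neg_le hg hgN hs.le h.1
    · positivity
  have hmajor := (summable_abs_add_one_rpow_neg hs).mul_left (((l : ℝ) + 2) ^ s / g)
  have hsum_comp : Summable (progressionWeight g l N s ∘ i) :=
    hmajor.of_nonneg_of_le (fun k => progressionWeight_nonneg hN _) hle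
  refine ⟨(hi.summable_iff hsupp).mp hsum_comp, ?_⟩
  rw [← hi.tsum_eq fun m hm => by_contra fun h => hm (hsupp m h), ← tsum_mul_left]
  exact hsum_comp.tsum_le_tsum hle hmajor

lemma rpow_mul_min_rpow_div_le {x N p a b : ℝ} (hx : 0 < x) (hN : 1 ≤ N) (hpa : 0 ≤ p + a)
    (hpb : p ≤ b - 1) :
    x ^ p * min ((x / N) ^ a) ((x / N) ^ (-b)) ≤ N ^ b * min (1 / N) (x ^ (p - b)) := by
  have hN0 : 0 < N := one_pos.trans_le hN
  have hlarge : x ^ p * (x / N) ^ (-b) = N ^ b * x ^ (p - b) := by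
    rw [Real.div_rpow hx.le hN0.le, Real.rpow_neg hN0.le, sub_eq_add_neg, Real.rpow_add hx]
    field_simp
  have hNp : N ^ p ≤ N ^ b * (1 / N) := by
    rw [mul_one_div, ← Real.rpow_sub_one hN0.ne']
    exact Real.rpow_le_rpow_of_exponent_le hN hpb
  rw [mul_min_of_nonneg _ _ (by positivity), hlarge, mul_min_of_nonneg _ _ (by positivity)]
  refine le_min ((le_total x N).elim (fun hxN => (min_le_left _ _).trans ?_)
    fun hNx => (min_le_right _ _).trans ?_) (min_le_right _ _)
  · calc x ^ p * (x / N) ^ a = x ^ (p + a) / N ^ a := by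
          rw [Real.div_rpow hx.le hN0.le, Real.rpow_add hx, mul_div_assoc]
      _ ≤ N ^ (p + a) / N ^ a := by gcongr
      _ = N ^ p := by rw [Real.rpow_add hN0, mul_div_cancel_right₀ _ (by positivity)]
      _ ≤ _ := hNp
  · calc N ^ b * x ^ (p - b) ≤ N ^ b * N ^ (p - b) :=
          mul_le_mul_of_nonneg_left (Real.rpow_le_rpow_of_nonpos hN0 hNx (by linarith))
            (by positivity)
      _ = N ^ p := by rw [← Real.rpow_add hN0, add_sub_cancel]
      _ ≤ _ := hNp

lemma summable_and_tsum_le_of_le_sum {ι κ : Type*} {T : κ → ℝ} {f : ι → κ → ℝ} {S : Finset ι}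
    (hT : ∀ m, 0 ≤ T m) (hle : ∀ m, T m ≤ ∑ i ∈ S, f i m) (hf : ∀ i ∈ S, Summable (f i)) :
    Summable T ∧ ∑' m, T m ≤ ∑ i ∈ S, ∑' m, f i m := by
  have hsum : Summable fun m => ∑ i ∈ S, f i m := summable_sum hf
  refine ⟨hsum.of_nonneg_of_le hT hle, ?_⟩
  rw [← Summable.tsum_finsetSum hf]
  exact (hsum.of_nonneg_of_le hT hle).tsum_le_tsum hle hsum

noncomputable def heckeTerm (lam : ℤ → ℂ) (W : ℝ → ℂ) (n l : ℕ) (m : ℤ) : ℝ :=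
  if m = 0 then 0 else
    (‖lam m‖ / Real.sqrt (|m| : ℝ)) * ‖W ((m : ℝ) / (n : ℝ))‖ * ‖normRamanujanSum n (m + l)‖

lemma heckeTerm_nonneg (lam : ℤ → ℂ) (W : ℝ → ℂ) (n l : ℕ) (m : ℤ) :
    0 ≤ heckeTerm lam W n l m := by
  unfold heckeTerm
  split_ifs
  · rfl
  · positivity

section HeckeTerm

variable {θ ε : ℝ} {lam : ℤ → ℂ} {W : ℝ → ℂ} {n : ℕ} (l : ℕ)

lemma norm_coeff_div_sqrt_mul_norm_le (hθ : 0 ≤ θ) (hε : 0 ≤ ε) (hn : 0 < n)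
    (hlam : ∀ m : ℤ, m ≠ 0 → ‖lam m‖ ≤ (|m| : ℝ) ^ (θ + ε/8))
    (hW : ∀ y : ℝ, y ≠ 0 →
      ‖W y‖ ≤ min (|y| ^ ((1:ℝ)/2 - ε/8)) (|y| ^ (-(1:ℝ)/2 - θ - ε/4)))
    {m : ℤ} (hm : m ≠ 0) :
    ‖lam m‖ / Real.sqrt (|m| : ℝ) * ‖W ((m : ℝ) / (n : ℝ))‖ ≤
      (n : ℝ) ^ (θ + 1/2 + ε/4) * min (1 / (n : ℝ)) (|(m : ℝ)| ^ (-(1 + ε/8))) := by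
  have hx : 0 < |(m : ℝ)| := by positivity
  have hn1 : (1 : ℝ) ≤ n := by exact_mod_cast hn
  have hlam' : ‖lam m‖ / Real.sqrt |(m : ℝ)| ≤ |(m : ℝ)| ^ (θ + ε/8 - 1/2) := by
    rw [Real.sqrt_eq_rpow, Real.rpow_sub hx]
    exact div_le_div_of_nonneg_right (hlam m hm) (by positivity)
  have hW' := hW ((m : ℝ) / n) (div_ne_zero (Int.cast_ne_zero.mpr hm) (by positivity))
  rw [abs_div, Nat.abs_cast, show -(1:ℝ)/2 - θ - ε/4 = -(θ + 1/2 + ε/4) by ring] at hW'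
  calc _ ≤ |(m : ℝ)| ^ (θ + ε/8 - 1/2) *
        min ((|(m : ℝ)| / n) ^ ((1:ℝ)/2 - ε/8)) ((|(m : ℝ)| / n) ^ (-(θ + 1/2 + ε/4))) :=
        mul_le_mul hlam' hW' (norm_nonneg _) (by positivity)
    _ ≤ (n : ℝ) ^ (θ + 1/2 + ε/4) *
        min (1 / (n : ℝ)) (|(m : ℝ)| ^ (θ + ε/8 - 1/2 - (θ + 1/2 + ε/4))) :=
        rpow_mul_min_rpow_div_le hx hn1 (by linarith) (by linarith)
    _ = _ := by ring_nf

lemma heckeTerm_le_sum_progressionWeight (hθ : 0 ≤ θ) (hε : 0 ≤ ε) (hn : 0 < n)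
    (hlam : ∀ m : ℤ, m ≠ 0 → ‖lam m‖ ≤ (|m| : ℝ) ^ (θ + ε/8))
    (hW : ∀ y : ℝ, y ≠ 0 →
      ‖W y‖ ≤ min (|y| ^ ((1:ℝ)/2 - ε/8)) (|y| ^ (-(1:ℝ)/2 - θ - ε/4)))
    (m : ℤ) :
    heckeTerm lam W n l m ≤ ∑ g ∈ n.divisors,
      (n : ℝ) ^ (θ + 1/2 + ε/4) / n.totient * g * progressionWeight g l n (1 + ε/8) m := by
  rcases eq_or_ne m 0 with rfl | hm
  · simp [heckeTerm, progressionWeight]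
  calc heckeTerm lam W n l m
        ≤ (n : ℝ) ^ (θ + 1/2 + ε/4) * min (1 / (n : ℝ)) (|(m : ℝ)| ^ (-(1 + ε/8))) *
          ((∑ g ∈ n.divisors with ((g : ℕ) : ℤ) ∣ m + l, (g : ℝ)) / n.totient) := by
        rw [heckeTerm, if_neg hm]
        exact mul_le_mul (norm_coeff_div_sqrt_mul_norm_le hθ hε hn hlam hW hm)
          (by exact_mod_cast norm_normRamanujanSum_le hn (m + l)) (norm_nonneg _) (by positivity)
    _ = _ := by
        simp only [progressionWeight, hm, ne_eq, not_false_eq_true, true_and, sum_filter,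
          mul_ite, mul_zero, sum_div, mul_sum, ite_div, zero_div]
        refine sum_congr rfl fun g _ => ?_
        split_ifs <;> ring

lemma summable_heckeTerm_and_tsum_le (hθ : 0 ≤ θ) (hε : 0 < ε) (hn : 0 < n)
    (hlam : ∀ m : ℤ, m ≠ 0 → ‖lam m‖ ≤ (|m| : ℝ) ^ (θ + ε/8))
    (hW : ∀ y : ℝ, y ≠ 0 →
      ‖W y‖ ≤ min (|y| ^ ((1:ℝ)/2 - ε/8)) (|y| ^ (-(1:ℝ)/2 - θ - ε/4))) :
    Summable (heckeTerm lam W n l) ∧ ∑' m, heckeTerm lam W n l m ≤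
      ((l : ℝ) + 2) ^ (1 + ε/8) * (∑' k : ℤ, (|(k : ℝ)| + 1) ^ (-(1 + ε/8))) *
        ((#n.divisors : ℝ) / n.totient) * (n : ℝ) ^ (θ + 1/2 + ε/4) := by
  set c := (n : ℝ) ^ (θ + 1/2 + ε/4) / n.totient
  have hprogression (g : ℕ) (hg : g ∈ n.divisors) :=
    summable_progressionWeight_and_tsum_le (l := l) (N := n) (s := 1 + ε/8)
      (Nat.pos_of_mem_divisors hg) (by exact_mod_cast Nat.divisor_le hg) (by linarith)
  obtain ⟨hsum, hle⟩ := summable_and_tsum_le_of_le_sum (heckeTerm_nonneg lam W n l)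
    (heckeTerm_le_sum_progressionWeight l hθ hε.le hn hlam hW)
    fun g hg => (hprogression g hg).1.mul_left (c * g)
  refine ⟨hsum, hle.trans ?_⟩
  calc _ = ∑ g ∈ n.divisors, c * g * ∑' m, progressionWeight g l n (1 + ε/8) m :=
        sum_congr rfl fun g _ => tsum_mul_left
    _ ≤ ∑ g ∈ n.divisors, c * g * (((l : ℝ) + 2) ^ (1 + ε/8) / g *
          ∑' k : ℤ, (|(k : ℝ)| + 1) ^ (-(1 + ε/8))) :=
        sum_le_sum fun g hg => mul_le_mul_of_nonneg_left (hprogression g hg).2 (by positivity)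
    _ = ∑ _g ∈ n.divisors, c * (((l : ℝ) + 2) ^ (1 + ε/8) *
          ∑' k : ℤ, (|(k : ℝ)| + 1) ^ (-(1 + ε/8))) := sum_congr rfl fun g hg => by
        have : (g : ℝ) ≠ 0 := by exact_mod_cast (Nat.pos_of_mem_divisors hg).ne'
        field_simp
    _ = _ := by
        rw [sum_const, nsmul_eq_mul]
        ring

end HeckeTerm

theorem key_analytic_estimate_general
    (θ ε : ℝ) (hθ : 0 ≤ θ) (hε : 0 < ε) (l : ℕ) :
    ∃ C : ℝ, 0 < C ∧
      ∀ (lam : ℤ → ℂ) (W : ℝ → ℂ),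
        (∀ m : ℤ, m ≠ 0 → ‖lam m‖ ≤ (|m| : ℝ) ^ (θ + ε/8)) →
        (∀ y : ℝ, y ≠ 0 →
          ‖W y‖ ≤ min (|y| ^ ((1:ℝ)/2 - ε/8)) (|y| ^ (-(1:ℝ)/2 - θ - ε/4))) →
        ∀ (n : ℕ), 0 < n →
          Summable (fun m : ℤ => if m = 0 then (0:ℝ) else
            (‖lam m‖ / Real.sqrt (|m| : ℝ)) * ‖W ((m : ℝ) / (n : ℝ))‖ *
              ‖normRamanujanSum n (m + l)‖) ∧
          (∑' m : ℤ, if m = 0 then (0:ℝ) else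
            (‖lam m‖ / Real.sqrt (|m| : ℝ)) * ‖W ((m : ℝ) / (n : ℝ))‖ *
              ‖normRamanujanSum n (m + l)‖) ≤ C * (n : ℝ) ^ (-(1:ℝ)/2 + θ + ε) := by
  obtain ⟨C, hC, hτφ⟩ := exists_card_divisors_div_totient_le (δ := 3 * ε / 4) (by positivity)
  set K := ((l : ℝ) + 2) ^ (1 + ε/8) * ∑' k : ℤ, (|(k : ℝ)| + 1) ^ (-(1 + ε/8))
  have hK : 0 < K := mul_pos (by positivity) <|
    (summable_abs_add_one_rpow_neg (by linarith)).tsum_pos (fun _ => by positivity) 0 (by simp)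
  refine ⟨K * C, by positivity, fun lam W hlam hW n hn => ?_⟩
  obtain ⟨hsum, hle⟩ := summable_heckeTerm_and_tsum_le l hθ hε hn hlam hW
  refine ⟨hsum, hle.trans ?_⟩
  have hn' : (0 : ℝ) < n := by exact_mod_cast hn
  calc K * ((#n.divisors : ℝ) / n.totient) * (n : ℝ) ^ (θ + 1/2 + ε/4)
      ≤ K * (C * (n : ℝ) ^ (3 * ε / 4 - 1)) * (n : ℝ) ^ (θ + 1/2 + ε/4) := by
        gcongr
        exact hτφ n hn
    _ = K * C * ((n : ℝ) ^ (3 * ε / 4 - 1) * (n : ℝ) ^ (θ + 1/2 + ε/4)) := by ring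
    _ = K * C * (n : ℝ) ^ (-(1:ℝ)/2 + θ + ε) := by
        rw [← Real.rpow_add hn']
        ring_nf

theorem key_analytic_estimate
    (θ ε : ℝ) (hθ : 0 ≤ θ) (hθ' : θ < 1/2) (hε : 0 < ε) (l : ℕ) :
    ∃ C : ℝ, 0 < C ∧
      ∀ (lam : ℤ → ℂ) (W : ℝ → ℂ),
        (∀ m : ℤ, m ≠ 0 → ‖lam m‖ ≤ (|m| : ℝ) ^ (θ + ε/8)) →
        (∀ y : ℝ, y ≠ 0 →
          ‖W y‖ ≤ min (|y| ^ ((1:ℝ)/2 - ε/8)) (|y| ^ (-(1:ℝ)/2 - θ - ε/4))) →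
        ∀ (n : ℕ), 0 < n →
          Summable (fun m : ℤ => if m = 0 then (0:ℝ) else
            (‖lam m‖ / Real.sqrt (|m| : ℝ)) * ‖W ((m : ℝ) / (n : ℝ))‖ *
              ‖normRamanujanSum n (m + l)‖) ∧
          (∑' m : ℤ, if m = 0 then (0:ℝ) else
            (‖lam m‖ / Real.sqrt (|m| : ℝ)) * ‖W ((m : ℝ) / (n : ℝ))‖ *
              ‖normRamanujanSum n (m + l)‖) ≤ C * (n : ℝ) ^ (-(1:ℝ)/2 + θ + ε) :=
  key_analytic_estimate_general θ ε hθ hε l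
end
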